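/- arXiv:1209.2883 — 5 statements merged into one kernel-verified Lean document; each statement's English description precedes it below -/
import Mathlib

section
/- Let Y be a finite set and W a convex subset of the set of probability mass functions on Y. Suppose f* is an element of W that maximizes the entropy H over W, i.e., H(f) ≤ H(f*) for all f in W. Then for every f in W, the support of f is contained in the support of f*: S_f ⊆ S_{f*}. -/
/-!
Mixing a competitor `f` into the maximizer `f*` with a small weight `t` changes the entropy by
at least `t (H f - H f*) - t log t · f y₀` whenever `f* y₀ = 0 < f y₀`: concavity of
`x ↦ -x log x` handles every coordinate, and the coordinate `y₀`, where `f*` vanishes,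
contributes the extra `-t log t · f y₀`. Since `-log t → ∞` as `t → 0⁺`, this gain is
positive for small `t`, contradicting maximality.
-/

open Real

noncomputable def entropy {Y : Type*} [Fintype Y] (f : Y → ℝ) : ℝ :=
  ∑ y, negMulLog (f y)

lemma neg_sum_mul_log_eq_entropy {Y : Type*} [Fintype Y] (f : Y → ℝ) :
    -∑ y, f y * log (f y) = entropy f := by
  simp only [entropy, negMulLog, neg_mul, Finset.sum_neg_distrib]

lemma negMulLog_mix_ge {x z t : ℝ} (hx : 0 ≤ x) (hz : 0 ≤ z) (ht₀ : 0 ≤ t)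
    (ht₁ : t ≤ 1) :
    t * negMulLog x + (1 - t) * negMulLog z ≤ negMulLog (t * x + (1 - t) * z) :=
  concaveOn_negMulLog.2 (Set.mem_Ici.2 hx) (Set.mem_Ici.2 hz) ht₀ (sub_nonneg.2 ht₁)
    (by ring)

lemma negMulLog_mix_of_eq_zero (x t : ℝ) :
    negMulLog (t * x + (1 - t) * 0) =
      t * negMulLog x + (1 - t) * negMulLog 0 + x * negMulLog t := by
  rw [mul_zero, add_zero, negMulLog_mul, negMulLog_zero]
  ring

lemma entropy_mix_ge {Y : Type*} [Fintype Y] [DecidableEq Y] {f g : Y → ℝ}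
    (hf : ∀ y, 0 ≤ f y) (hg : ∀ y, 0 ≤ g y) {t : ℝ} (ht₀ : 0 ≤ t) (ht₁ : t ≤ 1)
    {y₀ : Y} (hgy₀ : g y₀ = 0) :
    t * entropy f + (1 - t) * entropy g + f y₀ * negMulLog t ≤
      entropy (fun y => t * f y + (1 - t) * g y) := by
  have hpoint : ∀ y, t * negMulLog (f y) + (1 - t) * negMulLog (g y) +
      (if y = y₀ then f y₀ * negMulLog t else 0) ≤ negMulLog (t * f y + (1 - t) * g y) := by
    intro y
    split_ifs with hy
    · subst hy
      rw [hgy₀, negMulLog_mix_of_eq_zero]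
    · simpa using negMulLog_mix_ge (hf y) (hg y) ht₀ ht₁
  calc t * entropy f + (1 - t) * entropy g + f y₀ * negMulLog t
      = ∑ y, (t * negMulLog (f y) + (1 - t) * negMulLog (g y) +
          (if y = y₀ then f y₀ * negMulLog t else 0)) := by
        simp only [entropy, Finset.sum_add_distrib, Finset.mul_sum, Finset.sum_ite_eq',
          Finset.mem_univ, if_true]
    _ ≤ _ := Finset.sum_le_sum fun y _ => hpoint y

lemma exists_mul_add_mul_negMulLog_pos (a : ℝ) {c : ℝ} (hc : 0 < c) :
    ∃ t, 0 < t ∧ t ≤ 1 ∧ 0 < t * a + c * negMulLog t := by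
  set t := exp (min 0 (a / c) - 1)
  have ht₀ : 0 < t := exp_pos _
  have hlog : c * log t ≤ a - c := by
    have : c * min 0 (a / c) ≤ a := by
      calc c * min 0 (a / c) ≤ c * (a / c) := by gcongr; exact min_le_right _ _
        _ = a := mul_div_cancel₀ a hc.ne'
    rw [log_exp]
    linarith
  refine ⟨t, ht₀, exp_le_one_iff.2 (by linarith [min_le_left (0 : ℝ) (a / c)]), ?_⟩
  have : t * a + c * negMulLog t = t * (a - c * log t) := by
    rw [negMulLog]
    ring
  rw [this]
  exact mul_pos ht₀ (by linarith)

/-- Let `Y` be a finite set and `W` a convex subset of the set of pmfs on `Y`.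
If `fstar ∈ W` maximizes the entropy `H(f) = -∑ y, f y * log (f y)` over `W`, then for every
`f ∈ W` the support of `f` is contained in the support of `fstar`. -/
theorem support_subset_of_entropy_max {Y : Type*} [Fintype Y]
    (W : Set (Y → ℝ))
    (hW_pmf : ∀ f ∈ W, (∀ y, 0 ≤ f y) ∧ ∑ y, f y = 1)
    (hW_conv : ∀ f ∈ W, ∀ g ∈ W, ∀ l : ℝ, 0 ≤ l → l ≤ 1 →
      (fun y => l * f y + (1 - l) * g y) ∈ W)
    (fstar : Y → ℝ) (hfstar : fstar ∈ W)
    (hmax : ∀ f ∈ W,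
      -∑ y, f y * Real.log (f y) ≤ -∑ y, fstar y * Real.log (fstar y))
    (f : Y → ℝ) (hf : f ∈ W) :
    {y | 0 < f y} ⊆ {y | 0 < fstar y} := by
  classical
  intro y₀ (hfy₀ : 0 < f y₀)
  by_contra hy₀
  have hfstar₀ : fstar y₀ = 0 :=
    le_antisymm (not_lt.1 hy₀) ((hW_pmf fstar hfstar).1 y₀)
  obtain ⟨t, ht₀, ht₁, hgain⟩ :=
    exists_mul_add_mul_negMulLog_pos (entropy f - entropy fstar) hfy₀
  have hmix := entropy_mix_ge (hW_pmf f hf).1 (hW_pmf fstar hfstar).1 ht₀.le ht₁ hfstar₀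
  have hle := hmax _ (hW_conv f hf fstar hfstar t ht₀.le ht₁)
  rw [neg_sum_mul_log_eq_entropy, neg_sum_mul_log_eq_entropy] at hle
  linarith
end

section
/- Let X and U be finite nonempty sets, Q a transition kernel on X controlled by U, F ⊆ X, and let f* be a joint pmf maximizing the entropy over the feasible set of the convex program (joint pmfs satisfying the stationarity constraint Σ_{u⁺} f(x⁺,u⁺) = Σ_{x,u} Q(x⁺,x,u) f(x,u) for all x⁺, and Σ_u f(x,u) = 0 for all x ∈ F). Let K be any memoryless policy and let f^K be any joint pmf satisfying the closed-loop invariance equation f^K(x⁺,u⁺) = K(u⁺,x⁺) · Σ_{x,u} Q(x⁺,x,u) f^K(x,u) for all x⁺, u⁺, and Σ_u f^K(x,u) = 0 for all x ∈ F. Then the support of the state marginal of f^K is contained in the support of the state marginal of f*: { x : Σ_u f^K(x,u) > 0 } ⊆ { x : Σ_u f*(x,u) > 0 }. -/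
/-! Entropy has infinite slope at the boundary of the simplex. Mixing a small amount `t` of a
distribution `q` into a distribution `p` with `p i = 0 < q i` gains `-q i · t log t` in entropy at
`i`, while concavity bounds the change elsewhere below by `t (H q - H p)`; for small `t` the
superlinear gain wins. The feasible set is convex and contains every closed-loop invariant pmf,
so if `fK` charged a state that `f*` misses, mixing `fK` into `f*` would give a feasible pmf of
larger entropy. -/

open Real Finset

section Entropy

variable {ι : Type*} [Fintype ι] {p q : ι → ℝ}

theorem sum_negMulLog_mix_ge (hp : ∀ j, 0 ≤ p j) (hq : ∀ j, 0 ≤ q j) {i : ι}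
    (hpi : p i = 0) {t : ℝ} (ht0 : 0 ≤ t) (ht1 : t ≤ 1) :
    (1 - t) * ∑ j, negMulLog (p j) + t * ∑ j, negMulLog (q j) + q i * negMulLog t ≤
      ∑ j, negMulLog ((1 - t) * p j + t * q j) := by
  classical
  have hterm : ∀ j, (1 - t) * negMulLog (p j) + t * negMulLog (q j) +
      (if j = i then q i * negMulLog t else 0) ≤ negMulLog ((1 - t) * p j + t * q j) := by
    intro j
    split_ifs with hj
    · subst hj
      rw [hpi, mul_zero, zero_add, negMulLog_mul, negMulLog_zero]
      linarith
    · simpa using concaveOn_negMulLog.2 (hp j) (hq j) (by linarith) ht0 (by ring)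
  calc _ = ∑ j, ((1 - t) * negMulLog (p j) + t * negMulLog (q j) +
        if j = i then q i * negMulLog t else 0) := by
        simp only [sum_add_distrib, mul_sum, sum_ite_eq', mem_univ, if_true]
    _ ≤ _ := sum_le_sum fun j _ => hterm j

theorem exists_sum_negMulLog_lt_mix (hp : ∀ j, 0 ≤ p j) (hq : ∀ j, 0 ≤ q j) {i : ι}
    (hpi : p i = 0) (hqi : 0 < q i) :
    ∃ t ∈ Set.Ioc (0 : ℝ) 1,
      ∑ j, negMulLog (p j) < ∑ j, negMulLog ((1 - t) * p j + t * q j) := by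
  set P := ∑ j, negMulLog (p j)
  set R := ∑ j, negMulLog (q j)
  set t := min 1 (exp ((R - P) / q i - 1))
  have ht0 : 0 < t := lt_min one_pos (exp_pos _)
  have ht1 : t ≤ 1 := min_le_left _ _
  have hlog : log t < (R - P) / q i :=
    calc log t ≤ log (exp ((R - P) / q i - 1)) := log_le_log ht0 (min_le_right _ _)
      _ < (R - P) / q i := by rw [log_exp]; linarith
  have hgain : 0 < t * (R - P - q i * log t) := by
    have := (lt_div_iff₀ hqi).1 hlog
    exact mul_pos ht0 (by linarith)
  have hmix := sum_negMulLog_mix_ge hp hq hpi ht0.le ht1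
  refine ⟨t, ⟨ht0, ht1⟩, ?_⟩
  have : (1 - t) * P + t * R + q i * negMulLog t = P + t * (R - P - q i * log t) := by
    rw [negMulLog]; ring
  linarith

end Entropy

section ControlledChain

variable {X U : Type*} [Fintype X] [Fintype U]

def IsControlledStationary (Q : X → X → U → ℝ) (f : X → U → ℝ) : Prop :=
  ∀ x', ∑ u', f x' u' = ∑ x, ∑ u, Q x' x u * f x u

structure IsSafeStationaryPmf (Q : X → X → U → ℝ) (F : Set X) (f : X → U → ℝ) :
    Prop where
  nonneg : ∀ x u, 0 ≤ f x u
  sum_eq_one : ∑ x, ∑ u, f x u = 1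
  stationary : IsControlledStationary Q f
  safe : ∀ x ∈ F, ∑ u, f x u = 0

theorem isControlledStationary_of_closedLoop {Q : X → X → U → ℝ} {K : U → X → ℝ}
    {f : X → U → ℝ} (hK1 : ∀ x, ∑ u, K u x = 1)
    (hinv : ∀ x' u', f x' u' = K u' x' * ∑ x, ∑ u, Q x' x u * f x u) :
    IsControlledStationary Q f := by
  intro x'
  simp only [hinv x', ← sum_mul, hK1, one_mul]

theorem IsSafeStationaryPmf.mix {Q : X → X → U → ℝ} {F : Set X} {f g : X → U → ℝ}
    (hf : IsSafeStationaryPmf Q F f) (hg : IsSafeStationaryPmf Q F g) {t : ℝ}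
    (ht0 : 0 ≤ t) (ht1 : t ≤ 1) :
    IsSafeStationaryPmf Q F (fun x u => (1 - t) * f x u + t * g x u) where
  nonneg x u :=
    add_nonneg (mul_nonneg (by linarith) (hf.nonneg x u)) (mul_nonneg ht0 (hg.nonneg x u))
  sum_eq_one := by
    simp only [sum_add_distrib, ← mul_sum, hf.sum_eq_one, hg.sum_eq_one]
    ring
  stationary x' := by
    simp only [mul_add, mul_left_comm (Q x' _ _), sum_add_distrib, ← mul_sum,
      ← hf.stationary x', ← hg.stationary x']
  safe x hx := by
    simp only [sum_add_distrib, ← mul_sum, hf.safe x hx, hg.safe x hx]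
    ring

theorem neg_sum_sum_mul_log_eq (f : X → U → ℝ) :
    -∑ x, ∑ u, f x u * log (f x u) = ∑ z : X × U, negMulLog (f z.1 z.2) := by
  simp [negMulLog, Fintype.sum_prod_type]

end ControlledChain

theorem marginal_support_subset_of_entropy_max_general {X U : Type*} [Fintype X] [Fintype U]
    (Q : X → X → U → ℝ)
    (F : Set X)
    (fstar : X → U → ℝ)
    (hfstar0 : ∀ x u, 0 ≤ fstar x u)
    (hfstar1 : ∑ x, ∑ u, fstar x u = 1)
    (hfstar_stat : ∀ x' : X, ∑ u', fstar x' u' = ∑ x, ∑ u, Q x' x u * fstar x u)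
    (hfstar_safe : ∀ x ∈ F, ∑ u, fstar x u = 0)
    (hmax : ∀ f : X → U → ℝ,
      (∀ x u, 0 ≤ f x u) → (∑ x, ∑ u, f x u = 1) →
      (∀ x' : X, ∑ u', f x' u' = ∑ x, ∑ u, Q x' x u * f x u) →
      (∀ x ∈ F, ∑ u, f x u = 0) →
      -∑ x, ∑ u, f x u * Real.log (f x u) ≤
        -∑ x, ∑ u, fstar x u * Real.log (fstar x u))
    (K : U → X → ℝ)
    (hK1 : ∀ x, ∑ u, K u x = 1)
    (fK : X → U → ℝ)
    (hfK0 : ∀ x u, 0 ≤ fK x u)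
    (hfK1 : ∑ x, ∑ u, fK x u = 1)
    (hfK_inv : ∀ x' u', fK x' u' = K u' x' * ∑ x, ∑ u, Q x' x u * fK x u)
    (hfK_safe : ∀ x ∈ F, ∑ u, fK x u = 0) :
    {x : X | 0 < ∑ u, fK x u} ⊆ {x : X | 0 < ∑ u, fstar x u} := by
  intro x0 hx0
  by_contra hstar
  have hstar_feas : IsSafeStationaryPmf Q F fstar :=
    ⟨hfstar0, hfstar1, hfstar_stat, hfstar_safe⟩
  have hK_feas : IsSafeStationaryPmf Q F fK :=
    ⟨hfK0, hfK1, isControlledStationary_of_closedLoop hK1 hfK_inv, hfK_safe⟩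
  have hmarg : ∑ u, fstar x0 u = 0 :=
    le_antisymm (not_lt.1 hstar) (sum_nonneg fun u _ => hfstar0 x0 u)
  obtain ⟨u0, -, hu0⟩ := exists_lt_of_sum_lt (s := univ) (f := fun _ => (0 : ℝ)) (g := fK x0)
    (by simpa using hx0)
  have hzero : fstar x0 u0 = 0 :=
    (sum_eq_zero_iff_of_nonneg fun u _ => hfstar0 x0 u).1 hmarg u0 (mem_univ _)
  obtain ⟨t, ⟨ht0, ht1⟩, hlt⟩ :=
    exists_sum_negMulLog_lt_mix (p := fun z : X × U => fstar z.1 z.2) (q := fun z => fK z.1 z.2)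
      (i := (x0, u0)) (fun _ => hfstar0 _ _) (fun _ => hfK0 _ _) hzero hu0
  have hmix := hstar_feas.mix hK_feas ht0.le ht1
  have hle := hmax _ hmix.nonneg hmix.sum_eq_one hmix.stationary hmix.safe
  rw [neg_sum_sum_mul_log_eq, neg_sum_sum_mul_log_eq] at hle
  exact hle.not_gt hlt

/-- Let `fstar` be a joint pmf maximizing the entropy over the feasible set
(stationarity plus `F`-safety). Let `K` be any memoryless policy and `fK` any joint pmf
satisfying the closed-loop invariance equation under `K` and the `F`-safety constraint.
Then the support of the state marginal of `fK` is contained in that of `fstar`. -/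
theorem marginal_support_subset_of_entropy_max {X U : Type*} [Fintype X] [Fintype U]
    [Nonempty X] [Nonempty U]
    (Q : X → X → U → ℝ)
    (hQ0 : ∀ x' x u, 0 ≤ Q x' x u)
    (hQ1 : ∀ x u, ∑ x', Q x' x u = 1)
    (F : Set X)
    (fstar : X → U → ℝ)
    (hfstar0 : ∀ x u, 0 ≤ fstar x u)
    (hfstar1 : ∑ x, ∑ u, fstar x u = 1)
    (hfstar_stat : ∀ x' : X, ∑ u', fstar x' u' = ∑ x, ∑ u, Q x' x u * fstar x u)
    (hfstar_safe : ∀ x ∈ F, ∑ u, fstar x u = 0)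
    (hmax : ∀ f : X → U → ℝ,
      (∀ x u, 0 ≤ f x u) → (∑ x, ∑ u, f x u = 1) →
      (∀ x' : X, ∑ u', f x' u' = ∑ x, ∑ u, Q x' x u * f x u) →
      (∀ x ∈ F, ∑ u, f x u = 0) →
      -∑ x, ∑ u, f x u * Real.log (f x u) ≤
        -∑ x, ∑ u, fstar x u * Real.log (fstar x u))
    (K : U → X → ℝ)
    (hK0 : ∀ u x, 0 ≤ K u x)
    (hK1 : ∀ x, ∑ u, K u x = 1)
    (fK : X → U → ℝ)
    (hfK0 : ∀ x u, 0 ≤ fK x u)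
    (hfK1 : ∑ x, ∑ u, fK x u = 1)
    (hfK_inv : ∀ x' u', fK x' u' = K u' x' * ∑ x, ∑ u, Q x' x u * fK x u)
    (hfK_safe : ∀ x ∈ F, ∑ u, fK x u = 0) :
    {x : X | 0 < ∑ u, fK x u} ⊆ {x : X | 0 < ∑ u, fstar x u} :=
  marginal_support_subset_of_entropy_max_general Q F fstar hfstar0 hfstar1 hfstar_stat hfstar_safe
    hmax K hK1 fK hfK0 hfK1 hfK_inv hfK_safe
end

section
/- Let X and U be finite nonempty sets and W a convex subset of the set of joint pmfs on X × U. Suppose f̄ ∈ W maximizes the marginal entropy H(f_X) = -Σ_{x∈X} f_X(x) ln f_X(x) over W, where f_X(x) = Σ_{u∈U} f(x,u). Then for every f ∈ W, the support of the state marginal of f is contained in the support of the state marginal of f̄: { x : f_X(x) > 0 } ⊆ { x : f̄_X(x) > 0 }. -/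
/-!
If `fbar` gave no mass to a state `x₀` that some `f ∈ W` charges, move from `fbar` towards `f`
by a small step `l`. Concavity of `t ↦ -t log t` keeps the entropy above the linear interpolation,
and at `x₀` the marginal `l f_X(x₀)` contributes the additional `f_X(x₀) · (-l log l)`. Since
`-l log l` beats every multiple of `l` as `l → 0⁺`, the mixture has strictly larger marginal
entropy than `fbar`, contradicting maximality.
-/

open Finset Real

namespace Real

lemma exists_mul_lt_mul_negMulLog {c : ℝ} (hc : 0 < c) (D : ℝ) :
    ∃ l : ℝ, 0 < l ∧ l ≤ 1 ∧ l * D < c * negMulLog l := by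
  set t := |D| / c + 1
  have ht : 0 < t := by positivity
  refine ⟨exp (-t), exp_pos _, exp_le_one_iff.mpr (by linarith), ?_⟩
  have hct : D < c * t := by
    calc D ≤ |D| := le_abs_self D
      _ < |D| + c := by linarith
      _ = c * t := by rw [mul_add, mul_div_cancel₀ _ hc.ne', mul_one]
  have hneg : negMulLog (exp (-t)) = exp (-t) * t := by
    rw [negMulLog, log_exp]; ring
  rw [hneg, mul_left_comm]
  exact mul_lt_mul_of_pos_left hct (exp_pos _)

variable {X : Type*} [Fintype X]

lemma sum_negMulLog_mix_ge {p q : X → ℝ} (hp : ∀ x, 0 ≤ p x) (hq : ∀ x, 0 ≤ q x)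
    {l : ℝ} (hl₀ : 0 ≤ l) (hl₁ : l ≤ 1) {x₀ : X} (hqx₀ : q x₀ = 0) :
    l * ∑ x, negMulLog (p x) + (1 - l) * ∑ x, negMulLog (q x) + p x₀ * negMulLog l ≤
      ∑ x, negMulLog (l * p x + (1 - l) * q x) := by
  classical
  have hsplit : l * ∑ x, negMulLog (p x) + (1 - l) * ∑ x, negMulLog (q x) + p x₀ * negMulLog l
      = ∑ x, (l * negMulLog (p x) + (1 - l) * negMulLog (q x)
          + if x = x₀ then p x₀ * negMulLog l else 0) := by
    simp only [sum_add_distrib, mul_sum, sum_ite_eq', mem_univ, if_true]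
  rw [hsplit]
  refine sum_le_sum fun x _ => ?_
  by_cases hx : x = x₀
  · subst hx
    rw [if_pos rfl, hqx₀, negMulLog_zero, mul_zero, add_zero, add_zero, negMulLog_mul]
    linarith
  · rw [if_neg hx, add_zero]
    simpa only [smul_eq_mul] using
      concaveOn_negMulLog.2 (Set.mem_Ici.mpr (hp x)) (Set.mem_Ici.mpr (hq x))
        hl₀ (sub_nonneg.mpr hl₁) (add_sub_cancel l 1)

end Real

theorem marginal_support_subset_of_marginal_entropy_max_general {X U : Type*}
    [Fintype X] [Fintype U]
    (W : Set (X → U → ℝ))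
    (hW_pmf : ∀ f ∈ W, (∀ x u, 0 ≤ f x u) ∧ ∑ x, ∑ u, f x u = 1)
    (hW_conv : ∀ f ∈ W, ∀ g ∈ W, ∀ l : ℝ, 0 ≤ l → l ≤ 1 →
      (fun x u => l * f x u + (1 - l) * g x u) ∈ W)
    (fbar : X → U → ℝ) (hfbar : fbar ∈ W)
    (hmax : ∀ f ∈ W,
      -∑ x, (∑ u, f x u) * Real.log (∑ u, f x u) ≤
        -∑ x, (∑ u, fbar x u) * Real.log (∑ u, fbar x u))
    (f : X → U → ℝ) (hf : f ∈ W) :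
    {x : X | 0 < ∑ u, f x u} ⊆ {x : X | 0 < ∑ u, fbar x u} := by
  intro x₀ (hpx₀ : 0 < ∑ u, f x₀ u)
  set p : X → ℝ := fun x => ∑ u, f x u
  set q : X → ℝ := fun x => ∑ u, fbar x u
  have entropy_eq (g : X → U → ℝ) :
      -∑ x, (∑ u, g x u) * log (∑ u, g x u) = ∑ x, negMulLog (∑ u, g x u) := by
    simp only [negMulLog, neg_mul, sum_neg_distrib]
  have hp (x : X) : 0 ≤ p x := sum_nonneg fun u _ => (hW_pmf f hf).1 x u
  have hq (x : X) : 0 ≤ q x := sum_nonneg fun u _ => (hW_pmf fbar hfbar).1 x u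
  by_contra hnot
  have hqx₀ : q x₀ = 0 := le_antisymm (not_lt.mp hnot) (hq x₀)
  obtain ⟨l, hl₀, hl₁, hl⟩ := exists_mul_lt_mul_negMulLog hpx₀
    (∑ x, negMulLog (q x) - ∑ x, negMulLog (p x))
  have hmix : ∑ x, negMulLog (l * p x + (1 - l) * q x) ≤ ∑ x, negMulLog (q x) := by
    have h := hmax _ (hW_conv f hf fbar hfbar l hl₀.le hl₁)
    rw [entropy_eq, entropy_eq] at h
    simpa only [sum_add_distrib, ← mul_sum] using h
  have hgain := sum_negMulLog_mix_ge hp hq hl₀.le hl₁ hqx₀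
  linarith

/-- Let `W` be a convex subset of the joint pmfs on `X × U`. If `fbar ∈ W`
maximizes the marginal entropy `H(f_X) = -∑ x, f_X x * log (f_X x)` over `W`, where
`f_X x = ∑ u, f x u`, then for every `f ∈ W` the support of the state marginal of `f`
is contained in the support of the state marginal of `fbar`. -/
theorem marginal_support_subset_of_marginal_entropy_max {X U : Type*}
    [Fintype X] [Fintype U] [Nonempty X] [Nonempty U]
    (W : Set (X → U → ℝ))
    (hW_pmf : ∀ f ∈ W, (∀ x u, 0 ≤ f x u) ∧ ∑ x, ∑ u, f x u = 1)
    (hW_conv : ∀ f ∈ W, ∀ g ∈ W, ∀ l : ℝ, 0 ≤ l → l ≤ 1 →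
      (fun x u => l * f x u + (1 - l) * g x u) ∈ W)
    (fbar : X → U → ℝ) (hfbar : fbar ∈ W)
    (hmax : ∀ f ∈ W,
      -∑ x, (∑ u, f x u) * Real.log (∑ u, f x u) ≤
        -∑ x, (∑ u, fbar x u) * Real.log (∑ u, fbar x u))
    (f : X → U → ℝ) (hf : f ∈ W) :
    {x : X | 0 < ∑ u, f x u} ⊆ {x : X | 0 < ∑ u, fbar x u} :=
  marginal_support_subset_of_marginal_entropy_max_general W hW_pmf hW_conv fbar hfbar hmax f hf
end

section
/- Let X and U be finite nonempty sets and W a convex subset of the set of joint pmfs on X × U. Suppose f* ∈ W maximizes the joint entropy H(f) = -Σ_{x,u} f(x,u) ln f(x,u) over W, and f̄ ∈ W maximizes the marginal entropy H(f_X) = -Σ_x f_X(x) ln f_X(x) over W, where f_X(x) = Σ_u f(x,u). Then the supports of the two state marginals coincide: { x : f̄_X(x) > 0 } = { x : f*_X(x) > 0 }. -/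
/-!
Entropy has infinite slope at the boundary of the simplex: moving a mass `l` from a maximizer
`b` towards a competitor `a` with `a i > 0 = b i` gains `a i · (-l log l)` at coordinate `i`,
while concavity costs at most `O(l)` elsewhere. Hence a maximizer of entropy over a convex set
charges every coordinate that some member of the set charges. Applied to the state marginals
this gives `supp f*_X ⊆ supp f̄_X`; applied to the joint pmfs it gives `supp f̄ ⊆ supp f*`,
hence `supp f̄_X ⊆ supp f*_X`.
-/

open Real Finset

theorem sum_negMulLog_mix_ge_of_apply_eq_zero {ι : Type*} [Fintype ι] {a b : ι → ℝ}
    (ha : 0 ≤ a) (hb : 0 ≤ b) {i : ι} (hbi : b i = 0) {l : ℝ} (hl0 : 0 ≤ l) (hl1 : l ≤ 1) :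
    l * ∑ j, negMulLog (a j) + (1 - l) * ∑ j, negMulLog (b j) + a i * negMulLog l ≤
      ∑ j, negMulLog (l * a j + (1 - l) * b j) := by
  classical
  have hconc : ∀ j, l * negMulLog (a j) + (1 - l) * negMulLog (b j) ≤
      negMulLog (l * a j + (1 - l) * b j) := fun j => by
    simpa only [smul_eq_mul] using concaveOn_negMulLog.2 (Set.mem_Ici.2 (ha j))
      (Set.mem_Ici.2 (hb j)) hl0 (sub_nonneg.2 hl1) (add_sub_cancel l 1)
  have hrest := sum_le_sum fun j (_ : j ∈ univ.erase i) => hconc j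
  have hi : negMulLog (l * a i + (1 - l) * b i) = l * negMulLog (a i) + a i * negMulLog l := by
    rw [hbi, mul_zero, add_zero, negMulLog_mul]
    ring
  rw [sum_add_distrib, ← mul_sum, ← mul_sum] at hrest
  rw [← add_sum_erase _ _ (mem_univ i), ← add_sum_erase _ _ (mem_univ i),
    ← add_sum_erase _ _ (mem_univ i), hi, hbi, negMulLog_zero]
  linarith

theorem pos_of_isMaxOn_sum_negMulLog {ι : Type*} [Fintype ι] {S : Set (ι → ℝ)}
    (hS : Convex ℝ S) (hS_nonneg : ∀ a ∈ S, 0 ≤ a) {a b : ι → ℝ} (ha : a ∈ S) (hb : b ∈ S)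
    (hmax : IsMaxOn (fun c => ∑ j, negMulLog (c j)) S b) {i : ι} (hai : 0 < a i) :
    0 < b i := by
  by_contra hbi
  have hbi : b i = 0 := le_antisymm (not_lt.1 hbi) (hS_nonneg b hb i)
  set A := ∑ j, negMulLog (a j)
  set B := ∑ j, negMulLog (b j)
  -- With `l = exp (-s)` the gain `a i * negMulLog l = l * a i * s` beats the cost `l * (B - A)`.
  set s := |B - A| / a i + 1
  set l := exp (-s)
  have hl0 : 0 < l := exp_pos _
  have hl1 : l ≤ 1 := exp_le_one_iff.2 (neg_nonpos.2 (by positivity))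
  have hgain : a i * negMulLog l = l * (|B - A| + a i) := by
    simp only [l, s, negMulLog, log_exp]
    field_simp
  have hmix : l • a + (1 - l) • b ∈ S := hS ha hb hl0.le (sub_nonneg.2 hl1) (by ring)
  have hle := isMaxOn_iff.1 hmax _ hmix
  simp only [Pi.add_apply, Pi.smul_apply, smul_eq_mul] at hle
  have hge :=
    sum_negMulLog_mix_ge_of_apply_eq_zero (hS_nonneg a ha) (hS_nonneg b hb) hbi hl0.le hl1
  nlinarith [le_abs_self (B - A), mul_pos hl0 hai]

def stateMarginal (R X U : Type*) [Semiring R] [Fintype U] : (X → U → R) →ₗ[R] (X → R) where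
  toFun f x := ∑ u, f x u
  map_add' f g := by ext x; simp only [Pi.add_apply, sum_add_distrib]
  map_smul' c f := by ext x; simp only [Pi.smul_apply, smul_sum, RingHom.id_apply]

theorem convex_of_forall_mix_mem {E : Type*} [AddCommGroup E] [Module ℝ E] {W : Set E}
    (h : ∀ f ∈ W, ∀ g ∈ W, ∀ l : ℝ, 0 ≤ l → l ≤ 1 → l • f + (1 - l) • g ∈ W) :
    Convex ℝ W := by
  intro f hf g hg a b ha hb hab
  obtain rfl : b = 1 - a := by linarith
  exact h f hf g hg a ha (by linarith)

theorem marginal_supports_coincide_general {X U : Type*}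
    [Fintype X] [Fintype U]
    (W : Set (X → U → ℝ))
    (hW_pmf : ∀ f ∈ W, (∀ x u, 0 ≤ f x u) ∧ ∑ x, ∑ u, f x u = 1)
    (hW_conv : ∀ f ∈ W, ∀ g ∈ W, ∀ l : ℝ, 0 ≤ l → l ≤ 1 →
      (fun x u => l * f x u + (1 - l) * g x u) ∈ W)
    (fstar : X → U → ℝ) (hfstar : fstar ∈ W)
    (hmax_joint : ∀ f ∈ W,
      -∑ x, ∑ u, f x u * Real.log (f x u) ≤
        -∑ x, ∑ u, fstar x u * Real.log (fstar x u))
    (fbar : X → U → ℝ) (hfbar : fbar ∈ W)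
    (hmax_marg : ∀ f ∈ W,
      -∑ x, (∑ u, f x u) * Real.log (∑ u, f x u) ≤
        -∑ x, (∑ u, fbar x u) * Real.log (∑ u, fbar x u)) :
    {x : X | 0 < ∑ u, fbar x u} = {x : X | 0 < ∑ u, fstar x u} := by
  have hW : Convex ℝ W := convex_of_forall_mix_mem hW_conv
  have hW_nonneg : ∀ f ∈ W, 0 ≤ f := fun f hf x u => (hW_pmf f hf).1 x u
  have hstar_sub_bar : ∀ x, 0 < ∑ u, fstar x u → 0 < ∑ u, fbar x u := fun x hx =>
    pos_of_isMaxOn_sum_negMulLog (hW.linear_image (stateMarginal ℝ X U))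
      (by rintro _ ⟨f, hf, rfl⟩ x; exact sum_nonneg fun u _ => hW_nonneg f hf x u)
      (Set.mem_image_of_mem _ hfstar) (Set.mem_image_of_mem _ hfbar)
      (isMaxOn_iff.2 <| by
        rintro _ ⟨f, hf, rfl⟩
        simpa [stateMarginal, negMulLog, sum_neg_distrib] using hmax_marg f hf) hx
  have hbar_sub_star : ∀ x u, 0 < fbar x u → 0 < fstar x u := fun x u hxu =>
    pos_of_isMaxOn_sum_negMulLog (ι := X × U)
      (hW.linear_image (LinearEquiv.curry ℝ ℝ X U).symm.toLinearMap)
      (by rintro _ ⟨f, hf, rfl⟩ p; exact hW_nonneg f hf p.1 p.2)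
      (Set.mem_image_of_mem _ hfbar) (Set.mem_image_of_mem _ hfstar)
      (isMaxOn_iff.2 <| by
        rintro _ ⟨f, hf, rfl⟩
        simpa [Fintype.sum_prod_type, negMulLog, sum_neg_distrib] using hmax_joint f hf)
      (i := (x, u)) hxu
  ext x
  refine ⟨fun hx => ?_, hstar_sub_bar x⟩
  obtain ⟨u, -, hu⟩ := (sum_pos_iff_of_nonneg fun u _ => hW_nonneg fbar hfbar x u).1 hx
  exact (sum_pos_iff_of_nonneg fun u _ => hW_nonneg fstar hfstar x u).2
    ⟨u, mem_univ u, hbar_sub_star x u hu⟩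

/-- Let `W` be a convex subset of the joint pmfs on `X × U`. If `fstar ∈ W`
maximizes the joint entropy over `W` and `fbar ∈ W` maximizes the marginal entropy over
`W`, then the supports of the two state marginals coincide. -/
theorem marginal_supports_coincide {X U : Type*}
    [Fintype X] [Fintype U] [Nonempty X] [Nonempty U]
    (W : Set (X → U → ℝ))
    (hW_pmf : ∀ f ∈ W, (∀ x u, 0 ≤ f x u) ∧ ∑ x, ∑ u, f x u = 1)
    (hW_conv : ∀ f ∈ W, ∀ g ∈ W, ∀ l : ℝ, 0 ≤ l → l ≤ 1 →
      (fun x u => l * f x u + (1 - l) * g x u) ∈ W)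
    (fstar : X → U → ℝ) (hfstar : fstar ∈ W)
    (hmax_joint : ∀ f ∈ W,
      -∑ x, ∑ u, f x u * Real.log (f x u) ≤
        -∑ x, ∑ u, fstar x u * Real.log (fstar x u))
    (fbar : X → U → ℝ) (hfbar : fbar ∈ W)
    (hmax_marg : ∀ f ∈ W,
      -∑ x, (∑ u, f x u) * Real.log (∑ u, f x u) ≤
        -∑ x, (∑ u, fbar x u) * Real.log (∑ u, fbar x u)) :
    {x : X | 0 < ∑ u, fbar x u} = {x : X | 0 < ∑ u, fstar x u} :=
  marginal_supports_coincide_general W hW_pmf hW_conv fstar hfstar hmax_joint fbar hfbar hmax_marg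
end

section
/- Let X and U be finite nonempty sets, Q a transition kernel on X controlled by U, and f a joint pmf on X × U satisfying the stationarity constraint Σ_{u⁺} f(x⁺,u⁺) = Σ_{x,u} Q(x⁺,x,u) f(x,u) for all x⁺ ∈ X. Let f_X(x) = Σ_u f(x,u), let G be any memoryless policy, and define the policy K(u,x) = f(x,u)/f_X(x) if f_X(x) > 0 and K(u,x) = G(u,x) otherwise. Then the state marginal f_X is an invariant pmf of the closed-loop transition matrix: Σ_{x∈X} (Σ_{u∈U} Q(x⁺,x,u) K(u,x)) f_X(x) = f_X(x⁺) for all x⁺ ∈ X. -/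
open Finset

theorem sum_mul_ite_div_sum_mul_sum {U : Type*} [Fintype U] (c g G : U → ℝ)
    (hg : ∀ u, 0 ≤ g u) :
    (∑ u, c u * (if 0 < ∑ v, g v then g u / ∑ v, g v else G u)) * ∑ u, g u =
      ∑ u, c u * g u := by
  by_cases hpos : 0 < ∑ v, g v
  · simp only [if_pos hpos, sum_mul]
    refine sum_congr rfl fun u _ => ?_
    field_simp
  · have hsum : ∑ v, g v = 0 := le_antisymm (not_lt.mp hpos) (sum_nonneg fun v _ => hg v)
    have hzero : ∀ u, g u = 0 := fun u =>
      (sum_eq_zero_iff_of_nonneg fun v _ => hg v).mp hsum u (mem_univ u)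
    simp [hzero]

theorem marginal_invariant_closed_loop_general {X U : Type*} [Fintype X] [Fintype U]
    (Q : X → X → U → ℝ)
    (f : X → U → ℝ)
    (hf0 : ∀ x u, 0 ≤ f x u)
    (hstat : ∀ x' : X, ∑ u', f x' u' = ∑ x, ∑ u, Q x' x u * f x u)
    (G : U → X → ℝ) :
    ∀ x' : X,
      ∑ x, (∑ u, Q x' x u *
          (if 0 < ∑ u'', f x u'' then f x u / ∑ u'', f x u'' else G u x)) *
        (∑ u, f x u) = ∑ u, f x' u := by
  intro x'
  rw [hstat x']
  exact sum_congr rfl fun x _ => sum_mul_ite_div_sum_mul_sum _ _ _ (hf0 x)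

/-- If a joint pmf `f` satisfies the stationarity constraint, then its state
marginal `f_X` is an invariant pmf of the closed-loop transition matrix induced by the
policy `K(u,x) = f(x,u)/f_X(x)` when `f_X(x) > 0` and `K(u,x) = G(u,x)` otherwise:
`∑ x, (∑ u, Q(x⁺,x,u) K(u,x)) f_X(x) = f_X(x⁺)` for all `x⁺`. -/
theorem marginal_invariant_closed_loop {X U : Type*} [Fintype X] [Fintype U]
    [Nonempty X] [Nonempty U]
    (Q : X → X → U → ℝ)
    (hQ0 : ∀ x' x u, 0 ≤ Q x' x u)
    (hQ1 : ∀ x u, ∑ x', Q x' x u = 1)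
    (f : X → U → ℝ)
    (hf0 : ∀ x u, 0 ≤ f x u)
    (hf1 : ∑ x, ∑ u, f x u = 1)
    (hstat : ∀ x' : X, ∑ u', f x' u' = ∑ x, ∑ u, Q x' x u * f x u)
    (G : U → X → ℝ)
    (hG0 : ∀ u x, 0 ≤ G u x)
    (hG1 : ∀ x, ∑ u, G u x = 1) :
    ∀ x' : X,
      ∑ x, (∑ u, Q x' x u *
          (if 0 < ∑ u'', f x u'' then f x u / ∑ u'', f x u'' else G u x)) *
        (∑ u, f x u) = ∑ u, f x' u :=
  marginal_invariant_closed_loop_general Q f hf0 hstat G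
end
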